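/- Assume moreover C_γ > C_α > 0 and 0 < C_R ≤ C_γ − C_α. Then K𝟏(ξ) = C_β/(C_β+C_δ) for every ξ ≥ x₀, and K𝟏(ξ) ≤ (C_β/(C_β+C_δ))·(ξ/x₀)^{C_δ/(C_γ−C_α)} for every ξ with 0 < ξ < x₀. -/

import Mathlib

/-!
Above `x₀` the total jump rate per unit energy is `(C_β + C_δ)/(C_R x)`, so the survival
factor from `a` to `x` is `(a/x)^{(C_β+C_δ)/C_R}` and integrating the birth density
`C_β/(C_R x)` against it gives `C_β/(C_β+C_δ)`, independently of the starting point.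
Below `x₀` no birth can occur, so starting from `ξ < x₀` the individual must first survive
the deaths up to `x₀`, which has probability `(ξ/x₀)^{C_δ/C_R}`. Since `ξ/x₀ < 1` and
`C_R ≤ C_γ − C_α`, this is at most `(ξ/x₀)^{C_δ/(C_γ−C_α)}`.
-/

open MeasureTheory

/-- Birth rate in the allometric setting with `β = α−1`: `b(x) = C_β x^{α−1}` for
`x > x₀` and `0` otherwise. -/
noncomputable def birthRate (x₀ Cβ α : ℝ) (x : ℝ) : ℝ :=
  if x₀ < x then Cβ * x ^ (α - 1) else 0

/-- Death rate `d(x) = C_δ x^{α−1}`. -/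
noncomputable def deathRate (Cδ α : ℝ) (x : ℝ) : ℝ := Cδ * x ^ (α - 1)

/-- Net energy gain `g(x) = C_R x^α`. -/
noncomputable def energyGain (CR α : ℝ) (x : ℝ) : ℝ := CR * x ^ α

/-- The operator `K`:
`K f(ξ) = ∫_ξ^∞ (b(x)/g(x)) exp(−∫_ξ^x (b+d)/g) f(x−x₀) dx`. -/
noncomputable def Kop (x₀ Cβ Cδ CR α : ℝ) (f : ℝ → ℝ) (ξ : ℝ) : ℝ :=
  ∫ x in Set.Ioi ξ,
    birthRate x₀ Cβ α x / energyGain CR α x *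
      Real.exp
        (-(∫ τ in ξ..x,
            (birthRate x₀ Cβ α τ + deathRate Cδ α τ) / energyGain CR α τ)) *
      f (x - x₀)

open Real Set

lemma exp_neg_mul_log_div {a b : ℝ} (ha : 0 < a) (hb : 0 < b) (c : ℝ) :
    exp (-(c * log (b / a))) = (a / b) ^ c := by
  rw [rpow_def_of_pos (div_pos ha hb), ← inv_div b a, log_inv]
  ring_nf

lemma integral_Ioi_inv_mul_div_rpow {a c : ℝ} (ha : 0 < a) (hc : 0 < c) :
    ∫ x in Ioi a, x⁻¹ * (a / x) ^ c = c⁻¹ := by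
  have hpow : EqOn (fun x => x⁻¹ * (a / x) ^ c) (fun x => a ^ c * x ^ (-1 - c)) (Ioi a) := by
    intro x hx
    have hx0 : 0 < x := ha.trans hx
    simp only
    rw [div_rpow ha.le hx0.le, sub_eq_add_neg, rpow_add hx0, rpow_neg_one, rpow_neg hx0.le]
    ring
  rw [setIntegral_congr_fun measurableSet_Ioi hpow, integral_const_mul,
    integral_Ioi_rpow_of_lt (by linarith) ha, show -1 - c + 1 = -c by ring, rpow_neg ha.le]
  have : a ^ c ≠ 0 := (rpow_pos_of_pos ha c).ne'
  field_simp

section InverseIntegrand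

variable {f : ℝ → ℝ} {a b c : ℝ}

lemma intervalIntegrable_of_eqOn_mul_inv (ha : 0 < a) (hab : a ≤ b)
    (hf : EqOn f (fun τ => c * τ⁻¹) (Ioc a b)) : IntervalIntegrable f volume a b := by
  have hcont : ContinuousOn (fun τ : ℝ => c * τ⁻¹) (Icc a b) :=
    continuousOn_const.mul <| continuousOn_inv₀.mono fun τ hτ => (ha.trans_le hτ.1).ne'
  exact (intervalIntegrable_iff_integrableOn_Ioc_of_le hab).2 <|
    ((hcont.integrableOn_Icc).mono_set Ioc_subset_Icc_self).congr_fun hf.symm measurableSet_Ioc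

lemma intervalIntegral_eq_mul_log_of_eqOn (ha : 0 < a) (hab : a ≤ b)
    (hf : EqOn f (fun τ => c * τ⁻¹) (Ioc a b)) : ∫ τ in a..b, f τ = c * log (b / a) := by
  rw [intervalIntegral.integral_congr_ae (g := fun τ => c * τ⁻¹) ?_,
    intervalIntegral.integral_const_mul, integral_inv_of_pos ha (ha.trans_le hab)]
  refine Filter.Eventually.of_forall fun τ hτ => hf ?_
  rwa [uIoc_of_le hab] at hτ

end InverseIntegrand

/-- The total jump rate `(b + d)/g` per unit energy. -/
noncomputable def hazard (x₀ Cβ Cδ CR α : ℝ) (τ : ℝ) : ℝ :=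
  (birthRate x₀ Cβ α τ + deathRate Cδ α τ) / energyGain CR α τ

section Allometric

variable {x₀ Cβ Cδ CR α : ℝ}

lemma Kop_eq_integral_hazard (f : ℝ → ℝ) (ξ : ℝ) :
    Kop x₀ Cβ Cδ CR α f ξ = ∫ x in Ioi ξ, birthRate x₀ Cβ α x / energyGain CR α x *
      exp (-∫ τ in ξ..x, hazard x₀ Cβ Cδ CR α τ) * f (x - x₀) :=
  rfl

lemma mul_rpow_sub_one_div_mul_rpow (C CR : ℝ) {x : ℝ} (hx : 0 < x) :
    C * x ^ (α - 1) / (CR * x ^ α) = C / CR * x⁻¹ := by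
  rw [mul_div_mul_comm, ← rpow_sub hx, sub_sub_cancel_left, rpow_neg_one]

lemma birthRate_div_energyGain_of_lt {x : ℝ} (hx₀ : 0 ≤ x₀) (hx : x₀ < x) :
    birthRate x₀ Cβ α x / energyGain CR α x = Cβ / CR * x⁻¹ := by
  rw [birthRate, energyGain, if_pos hx, mul_rpow_sub_one_div_mul_rpow _ _ (hx₀.trans_lt hx)]

lemma birthRate_div_energyGain_of_le {x : ℝ} (hx : x ≤ x₀) :
    birthRate x₀ Cβ α x / energyGain CR α x = 0 := by
  rw [birthRate, if_neg (not_lt.2 hx), zero_div]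

lemma hazard_of_lt {τ : ℝ} (hx₀ : 0 ≤ x₀) (hτ : x₀ < τ) :
    hazard x₀ Cβ Cδ CR α τ = (Cβ + Cδ) / CR * τ⁻¹ := by
  rw [hazard, birthRate, deathRate, energyGain, if_pos hτ, ← add_mul,
    mul_rpow_sub_one_div_mul_rpow _ _ (hx₀.trans_lt hτ)]

lemma hazard_of_le {τ : ℝ} (hτ0 : 0 < τ) (hτ : τ ≤ x₀) :
    hazard x₀ Cβ Cδ CR α τ = Cδ / CR * τ⁻¹ := by
  rw [hazard, birthRate, deathRate, energyGain, if_neg (not_lt.2 hτ), zero_add,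
    mul_rpow_sub_one_div_mul_rpow _ _ hτ0]

lemma exp_neg_integral_hazard_of_le {a x : ℝ} (hx₀ : 0 < x₀) (ha : x₀ ≤ a) (hax : a ≤ x) :
    exp (-∫ τ in a..x, hazard x₀ Cβ Cδ CR α τ) = (a / x) ^ ((Cβ + Cδ) / CR) := by
  have ha0 : 0 < a := hx₀.trans_le ha
  rw [intervalIntegral_eq_mul_log_of_eqOn ha0 hax
      fun τ hτ => hazard_of_lt hx₀.le (ha.trans_lt hτ.1),
    exp_neg_mul_log_div ha0 (ha0.trans_le hax)]

theorem Kop_one_of_le {ξ : ℝ} (hx₀ : 0 < x₀) (hCβδ : 0 < Cβ + Cδ) (hCR : 0 < CR)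
    (hξ : x₀ ≤ ξ) : Kop x₀ Cβ Cδ CR α (fun _ => 1) ξ = Cβ / (Cβ + Cδ) := by
  have hξ0 : 0 < ξ := hx₀.trans_le hξ
  have hintegrand : EqOn
      (fun x => birthRate x₀ Cβ α x / energyGain CR α x *
        exp (-∫ τ in ξ..x, hazard x₀ Cβ Cδ CR α τ) * 1)
      (fun x => Cβ / CR * (x⁻¹ * (ξ / x) ^ ((Cβ + Cδ) / CR))) (Ioi ξ) := fun x hx => by
    simp only
    rw [birthRate_div_energyGain_of_lt hx₀.le (hξ.trans_lt hx),
      exp_neg_integral_hazard_of_le hx₀ hξ hx.le]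
    ring
  rw [Kop_eq_integral_hazard, setIntegral_congr_fun measurableSet_Ioi hintegrand,
    integral_const_mul, integral_Ioi_inv_mul_div_rpow hξ0 (by positivity)]
  field_simp

/-- Below `x₀` the process can only die, so `K f` there is `K f (x₀)` damped by the
probability of surviving up to `x₀`. -/
theorem Kop_of_lt (f : ℝ → ℝ) {ξ : ℝ} (hξ0 : 0 < ξ) (hξ : ξ < x₀) :
    Kop x₀ Cβ Cδ CR α f ξ = (ξ / x₀) ^ (Cδ / CR) * Kop x₀ Cβ Cδ CR α f x₀ := by
  have hx₀ : 0 < x₀ := hξ0.trans hξ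
  have hlow : EqOn (hazard x₀ Cβ Cδ CR α) (fun τ => Cδ / CR * τ⁻¹) (Ioc ξ x₀) :=
    fun τ hτ => hazard_of_le (hξ0.trans hτ.1) hτ.2
  have hsplit : ∀ x, x₀ < x → ∫ τ in ξ..x, hazard x₀ Cβ Cδ CR α τ
      = Cδ / CR * log (x₀ / ξ) + ∫ τ in x₀..x, hazard x₀ Cβ Cδ CR α τ := fun x hx => by
    rw [← intervalIntegral.integral_add_adjacent_intervals
        (intervalIntegrable_of_eqOn_mul_inv hξ0 hξ.le hlow)
        (intervalIntegrable_of_eqOn_mul_inv hx₀ hx.le fun τ hτ => hazard_of_lt hx₀.le hτ.1),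
      intervalIntegral_eq_mul_log_of_eqOn hξ0 hξ.le hlow]
  have hintegrand : EqOn
      (fun x => birthRate x₀ Cβ α x / energyGain CR α x *
        exp (-∫ τ in ξ..x, hazard x₀ Cβ Cδ CR α τ) * f (x - x₀))
      ((Ioi x₀).indicator fun x => (ξ / x₀) ^ (Cδ / CR) *
        (birthRate x₀ Cβ α x / energyGain CR α x *
          exp (-∫ τ in x₀..x, hazard x₀ Cβ Cδ CR α τ) * f (x - x₀))) (Ioi ξ) := by
    intro x _
    simp only
    by_cases hx : x₀ < x
    · rw [indicator_of_mem (show x ∈ Ioi x₀ from hx), hsplit x hx, neg_add, exp_add,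
        exp_neg_mul_log_div hξ0 hx₀]
      ring
    · rw [indicator_of_notMem (show x ∉ Ioi x₀ from hx),
        birthRate_div_energyGain_of_le (not_lt.1 hx), zero_mul, zero_mul]
  rw [Kop_eq_integral_hazard, setIntegral_congr_fun measurableSet_Ioi hintegrand,
    setIntegral_indicator measurableSet_Ioi, Ioi_inter_Ioi, sup_eq_right.2 hξ.le,
    integral_const_mul, Kop_eq_integral_hazard]

end Allometric

theorem stmt14_general (α x₀ Cβ Cδ CR Cγ Cα : ℝ)
    (hx₀ : 0 < x₀)
    (hCβ : 0 < Cβ) (hCδ : 0 < Cδ) (hCR : 0 < CR)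
    (hCRle : CR ≤ Cγ - Cα) :
    (∀ ξ : ℝ, x₀ ≤ ξ → Kop x₀ Cβ Cδ CR α (fun _ => 1) ξ = Cβ / (Cβ + Cδ)) ∧
      (∀ ξ : ℝ, 0 < ξ → ξ < x₀ →
        Kop x₀ Cβ Cδ CR α (fun _ => 1) ξ ≤
          Cβ / (Cβ + Cδ) * (ξ / x₀) ^ (Cδ / (Cγ - Cα))) := by
  refine ⟨fun ξ hξ => Kop_one_of_le hx₀ (add_pos hCβ hCδ) hCR hξ, fun ξ hξ0 hξ => ?_⟩
  rw [Kop_of_lt _ hξ0 hξ, Kop_one_of_le hx₀ (add_pos hCβ hCδ) hCR le_rfl, mul_comm]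
  have hexponent : Cδ / (Cγ - Cα) ≤ Cδ / CR := div_le_div_of_nonneg_left hCδ.le hCR hCRle
  exact mul_le_mul_of_nonneg_left
    (rpow_le_rpow_of_exponent_ge (div_pos hξ0 hx₀) ((div_le_one hx₀).2 hξ.le) hexponent)
    (by positivity)

/-- Piecewise formula for `K𝟏` (proof of Lemma 6.18): with `C_γ > C_α > 0` and
`0 < C_R ≤ C_γ − C_α`, one has `K𝟏(ξ) = C_β/(C_β+C_δ)` for `ξ ≥ x₀`, and
`K𝟏(ξ) ≤ (C_β/(C_β+C_δ))·(ξ/x₀)^{C_δ/(C_γ−C_α)}` for `0 < ξ < x₀`. -/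
theorem stmt14 (α x₀ Cβ Cδ CR Cγ Cα : ℝ)
    (hα0 : 0 < α) (hα1 : α ≤ 1) (hx₀ : 0 < x₀)
    (hCβ : 0 < Cβ) (hCδ : 0 < Cδ) (hCR : 0 < CR)
    (hCα : 0 < Cα) (hCγ : Cα < Cγ) (hCRle : CR ≤ Cγ - Cα) :
    (∀ ξ : ℝ, x₀ ≤ ξ → Kop x₀ Cβ Cδ CR α (fun _ => 1) ξ = Cβ / (Cβ + Cδ)) ∧
      (∀ ξ : ℝ, 0 < ξ → ξ < x₀ →
        Kop x₀ Cβ Cδ CR α (fun _ => 1) ξ ≤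
          Cβ / (Cβ + Cδ) * (ξ / x₀) ^ (Cδ / (Cγ - Cα))) :=
  stmt14_general α x₀ Cβ Cδ CR Cγ Cα hx₀ hCβ hCδ hCR hCRle
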